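/- arXiv:1211.5088 — 2 statements merged into one kernel-verified Lean document; each statement's English description precedes it below -/
import Mathlib

section
/- For every positive integer N and every integer j with 0 ≤ j ≤ N, the function U_{j,N}(z) := (1-|z|²)^{N+j-1} / |1-z|^{2j} is N-harmonic on ℂ \ {1}, i.e. Δ^N U_{j,N} = 0 on ℂ \ {1}. -/
open MeasureTheory Metric Complex
open scoped ENNReal

noncomputable section

/-- Partial derivative in the `x`-direction. -/
def pdx (f : ℂ → ℂ) : ℂ → ℂ := fun z => fderiv ℝ f z 1

/-- Partial derivative in the `y`-direction. -/
def pdy (f : ℂ → ℂ) : ℂ → ℂ := fun z => fderiv ℝ f z Complex.I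

/-- The Laplacian Δ = ∂²/∂x² + ∂²/∂y². -/
def lap (f : ℂ → ℂ) : ℂ → ℂ := fun z => pdx (pdx f) z + pdy (pdy f) z

/-- The Wirtinger derivative ∂_z = (∂/∂x - i ∂/∂y)/2. -/
def dz (f : ℂ → ℂ) : ℂ → ℂ := fun z => (pdx f z - Complex.I * pdy f z) / 2

/-- The Wirtinger derivative ∂̄_z = (∂/∂x + i ∂/∂y)/2. -/
def dzbar (f : ℂ → ℂ) : ℂ → ℂ := fun z => (pdx f z + Complex.I * pdy f z) / 2

/-- The open unit disk 𝔻 ⊂ ℂ. -/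
def unitDisk : Set ℂ := Metric.ball (0 : ℂ) 1

/-- `u` is `N`-harmonic on `Ω`: smooth and `Δ^N u = 0` on `Ω`. -/
def NHarmonicOn (N : ℕ) (u : ℂ → ℂ) (Ω : Set ℂ) : Prop :=
  ContDiffOn ℝ (⊤ : ℕ∞) u Ω ∧ ∀ z ∈ Ω, lap^[N] u z = 0

/-- The weighted integral ∫_S |u(z)|^p (1-|z|²)^α dA(z), valued in ℝ≥0∞. -/
def wIntOn (S : Set ℂ) (p α : ℝ) (u : ℂ → ℂ) : ℝ≥0∞ :=
  ∫⁻ z in S, ENNReal.ofReal (‖u z‖ ^ p * (1 - ‖z‖ ^ 2) ^ α)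

/-- `u ∈ PH^p_{N,α}(𝔻)`. -/
def memPH (N : ℕ) (p α : ℝ) (u : ℂ → ℂ) : Prop :=
  NHarmonicOn N u unitDisk ∧ wIntOn unitDisk p α u < ⊤

/-- The piecewise affine functions `b_{j,N}(p)`. -/
def bcrit (j N : ℕ) (p : ℝ) : ℝ :=
  if j = 0 then -1 - ((N : ℝ) - 1) * p
  else max (-1 - ((j : ℝ) + (N : ℝ) - 1) * p) (-2 + ((j : ℝ) - (N : ℝ) + 1) * p)

/-- The modified functions `a_{j,N}(p)`. -/
def acrit (j N : ℕ) (p : ℝ) : ℝ := min (bcrit j N p) (-1 + ((j : ℝ) - (N : ℝ)) * p)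

/-- The multiplication operator `M[v](z) = (1-|z|²) v(z)`. -/
def Mop (v : ℂ → ℂ) : ℂ → ℂ := fun z => ((1 - ‖z‖ ^ 2 : ℝ) : ℂ) * v z

/-- The second order operator `L_θ`. -/
def Lop (θ : ℝ) (u : ℂ → ℂ) : ℂ → ℂ := fun z =>
  ((1 - ‖z‖ ^ 2 : ℝ) : ℂ) * lap u z
    + 4 * (θ : ℂ) * (z * dz u z + (starRingEnd ℂ) z * dzbar u z)
    - 4 * (θ : ℂ) ^ 2 * u z

/-- The Euclidean norm of the gradient `|∇u(z)|`. -/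
def gradNorm (u : ℂ → ℂ) (z : ℂ) : ℝ :=
  Real.sqrt (‖pdx u z‖ ^ 2 + ‖pdy u z‖ ^ 2)

/-- The kernel `U_{j,N}(z) = (1-|z|²)^{N+j-1} / |1-z|^{2j}`. -/
def Ukernel (j N : ℕ) : ℂ → ℂ := fun z =>
  (((1 - ‖z‖ ^ 2) ^ (N + j - 1) / ‖1 - z‖ ^ (2 * j) : ℝ) : ℂ)

namespace Stmt16

/-- Directional derivative. -/
def pd (v : ℂ) (f : ℂ → ℂ) : ℂ → ℂ := fun z => fderiv ℝ f z v

lemma lap_eq_pd (f : ℂ → ℂ) (z : ℂ) :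
    lap f z = pd 1 (pd 1 f) z + pd Complex.I (pd Complex.I f) z := rfl

/-- Basic monomials `(1-z)^m * conj(1-z)^n`, `m n : ℤ`. -/
def F (m n : ℤ) : ℂ → ℂ := fun z => (1 - z) ^ m * ((starRingEnd ℂ) (1 - z)) ^ n

lemma ev_of_ne {f g : ℂ → ℂ} {z : ℂ} (hz : z ≠ 1) (h : ∀ w : ℂ, w ≠ 1 → f w = g w) :
    f =ᶠ[nhds z] g := by
  filter_upwards [isOpen_ne.mem_nhds hz] using h

lemma pd_congr {v : ℂ} {f g : ℂ → ℂ} {z : ℂ} (h : f =ᶠ[nhds z] g) : pd v f z = pd v g z := by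
  unfold pd; rw [h.fderiv_eq]

lemma pd_congr_ev {v : ℂ} {f g : ℂ → ℂ} {z : ℂ} (h : f =ᶠ[nhds z] g) :
    pd v f =ᶠ[nhds z] pd v g := by
  filter_upwards [h.eventuallyEq_nhds] with y hy using pd_congr hy

lemma lap_congr {f g : ℂ → ℂ} {z : ℂ} (h : f =ᶠ[nhds z] g) : lap f z = lap g z := by
  rw [lap_eq_pd, lap_eq_pd, pd_congr (pd_congr_ev h), pd_congr (pd_congr_ev h)]

lemma lap_congr_ev {f g : ℂ → ℂ} {z : ℂ} (h : f =ᶠ[nhds z] g) :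
    lap f =ᶠ[nhds z] lap g := by
  filter_upwards [h.eventuallyEq_nhds] with y hy using lap_congr hy

lemma lapIter_congr (t : ℕ) {f g : ℂ → ℂ} {z : ℂ} (h : f =ᶠ[nhds z] g) :
    lap^[t] f z = lap^[t] g z := by
  induction t generalizing f g z with
  | zero => exact h.eq_of_nhds
  | succ t ih =>
    rw [Function.iterate_succ_apply, Function.iterate_succ_apply]
    exact ih (lap_congr_ev h)

lemma exists_hasFDerivAt_F (m n : ℤ) {z : ℂ} (hz : z ≠ 1) :
    ∃ D : ℂ →L[ℝ] ℂ, HasFDerivAt (F m n) D z ∧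
      ∀ v, D v = -(m : ℂ) * F (m - 1) n z * v - (n : ℂ) * F m (n - 1) z * (starRingEnd ℂ) v := by
  have hw : (1 : ℂ) - z ≠ 0 := sub_ne_zero_of_ne (Ne.symm hz)
  have hlin : HasDerivAt (fun w : ℂ => 1 - w) (-1) z := (hasDerivAt_id z).const_sub 1
  have h1 : HasDerivAt (fun w : ℂ => (1 - w) ^ m) ((m : ℂ) * (1 - z) ^ (m - 1) * -1) z := by
    simpa [Function.comp_def] using (hasDerivAt_zpow m (1 - z) (Or.inl hw)).comp z hlin
  have h2 : HasDerivAt (fun w : ℂ => (1 - w) ^ n) ((n : ℂ) * (1 - z) ^ (n - 1) * -1) z := by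
    simpa [Function.comp_def] using (hasDerivAt_zpow n (1 - z) (Or.inl hw)).comp z hlin
  have h2c : HasFDerivAt (fun w : ℂ => (starRingEnd ℂ) ((1 - w) ^ n))
      (Complex.conjCLE.toContinuousLinearMap.comp
        ((ContinuousLinearMap.smulRight (1 : ℂ →L[ℂ] ℂ)
          ((n : ℂ) * (1 - z) ^ (n - 1) * -1)).restrictScalars ℝ)) z := by
    have := (Complex.conjCLE.toContinuousLinearMap.hasFDerivAt
        (x := (1 - z) ^ n)).comp z (h2.hasFDerivAt.restrictScalars ℝ)
    exact this
  have hmul := (h1.hasFDerivAt.restrictScalars ℝ).mul h2c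
  have hFeq : F m n = fun w : ℂ => (1 - w) ^ m * (starRingEnd ℂ) ((1 - w) ^ n) := by
    funext w; simp [F, map_zpow₀]
  refine ⟨_, by rw [hFeq]; exact hmul, fun v => ?_⟩
  simp only [ContinuousLinearMap.add_apply, ContinuousLinearMap.smul_apply,
    ContinuousLinearMap.coe_restrictScalars', ContinuousLinearMap.comp_apply,
    ContinuousLinearMap.smulRight_apply, ContinuousLinearMap.one_apply,
    ContinuousLinearEquiv.coe_coe, Complex.conjCLE_apply, smul_eq_mul,
    map_mul, map_intCast, map_zpow₀, map_neg, map_one, F,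
    ContinuousLinearMap.toSpanSingleton_apply]
  ring

lemma diff_F (m n : ℤ) {z : ℂ} (hz : z ≠ 1) : DifferentiableAt ℝ (F m n) z := by
  obtain ⟨D, hD, -⟩ := exists_hasFDerivAt_F m n hz
  exact hD.differentiableAt

lemma pd_F (v : ℂ) (m n : ℤ) {z : ℂ} (hz : z ≠ 1) :
    pd v (F m n) z
      = -(m : ℂ) * F (m - 1) n z * v - (n : ℂ) * F m (n - 1) z * (starRingEnd ℂ) v := by
  obtain ⟨D, hD, hDv⟩ := exists_hasFDerivAt_F m n hz
  unfold pd; rw [hD.fderiv]; exact hDv v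

lemma pd_sum_mul (v : ℂ) {ι : Type} (s : Finset ι) (c : ι → ℂ) (m n : ι → ℤ) {z : ℂ}
    (hz : z ≠ 1) :
    pd v (fun w => ∑ p ∈ s, c p * F (m p) (n p) w) z
      = ∑ p ∈ s, c p * pd v (F (m p) (n p)) z := by
  unfold pd
  rw [fderiv_fun_sum (fun p _ => (diff_F (m p) (n p) hz).const_mul (c p))]
  rw [ContinuousLinearMap.sum_apply]
  refine Finset.sum_congr rfl fun p _ => ?_
  rw [fderiv_const_mul (diff_F (m p) (n p) hz)]
  simp

lemma pd_sum_comb (v : ℂ) {ι : Type} (s : Finset ι) (a b : ι → ℂ)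
    (m1 n1 m2 n2 : ι → ℤ) {z : ℂ} (hz : z ≠ 1) :
    pd v (fun w => ∑ p ∈ s, (a p * F (m1 p) (n1 p) w + b p * F (m2 p) (n2 p) w)) z
      = ∑ p ∈ s, (a p * pd v (F (m1 p) (n1 p)) z + b p * pd v (F (m2 p) (n2 p)) z) := by
  unfold pd
  rw [fderiv_fun_sum (fun p _ =>
    ((diff_F (m1 p) (n1 p) hz).const_mul (a p)).fun_add
      ((diff_F (m2 p) (n2 p) hz).const_mul (b p)))]
  rw [ContinuousLinearMap.sum_apply]
  refine Finset.sum_congr rfl fun p _ => ?_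
  rw [fderiv_fun_add ((diff_F (m1 p) (n1 p) hz).const_mul (a p))
      ((diff_F (m2 p) (n2 p) hz).const_mul (b p)),
    fderiv_const_mul (diff_F (m1 p) (n1 p) hz),
    fderiv_const_mul (diff_F (m2 p) (n2 p) hz)]
  simp

lemma lap_CF {ι : Type} (s : Finset ι) (c : ι → ℂ) (m n : ι → ℤ) {z : ℂ} (hz : z ≠ 1) :
    lap (fun w => ∑ p ∈ s, c p * F (m p) (n p) w) z
      = ∑ p ∈ s, c p * (4 * (m p : ℂ) * (n p : ℂ)) * F (m p - 1) (n p - 1) z := by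
  have key : ∀ v v' : ℂ,
      pd v' (pd v (fun w => ∑ p ∈ s, c p * F (m p) (n p) w)) z
        = ∑ p ∈ s, ((c p * -(m p : ℂ) * v) * pd v' (F (m p - 1) (n p)) z
            + (c p * -(n p : ℂ) * (starRingEnd ℂ) v) * pd v' (F (m p) (n p - 1)) z) := by
    intro v v'
    have h1 : pd v (fun w => ∑ p ∈ s, c p * F (m p) (n p) w) =ᶠ[nhds z]
        (fun w => ∑ p ∈ s, ((c p * -(m p : ℂ) * v) * F (m p - 1) (n p) w
            + (c p * -(n p : ℂ) * (starRingEnd ℂ) v) * F (m p) (n p - 1) w)) := by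
      apply ev_of_ne hz
      intro w hw
      rw [pd_sum_mul v s c m n hw]
      refine Finset.sum_congr rfl fun p _ => ?_
      rw [pd_F v (m p) (n p) hw]; ring
    rw [pd_congr h1, pd_sum_comb v' s _ _ _ _ _ _ hz]
  rw [lap_eq_pd, key 1 1, key Complex.I Complex.I, ← Finset.sum_add_distrib]
  refine Finset.sum_congr rfl fun p _ => ?_
  rw [pd_F 1 (m p - 1) (n p) hz, pd_F 1 (m p) (n p - 1) hz,
    pd_F Complex.I (m p - 1) (n p) hz, pd_F Complex.I (m p) (n p - 1) hz]
  simp only [map_one, Complex.conj_I]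
  push_cast
  ring_nf
  simp only [Complex.I_sq]
  ring

lemma lapIter_CF (t : ℕ) {ι : Type} (s : Finset ι) (c : ι → ℂ) (m n : ι → ℤ) :
    ∀ z : ℂ, z ≠ 1 →
    lap^[t] (fun w => ∑ p ∈ s, c p * F (m p) (n p) w) z
      = ∑ p ∈ s, c p * ((4 : ℂ) ^ t
          * ∏ k ∈ Finset.range t, (((m p : ℂ) - (k : ℂ)) * ((n p : ℂ) - (k : ℂ))))
          * F (m p - (t : ℤ)) (n p - (t : ℤ)) z := by
  induction t with
  | zero => intro z hz; simp
  | succ t ih =>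
    intro z hz
    rw [Function.iterate_succ', Function.comp_apply]
    have h1 : lap^[t] (fun w => ∑ p ∈ s, c p * F (m p) (n p) w) =ᶠ[nhds z]
        (fun w => ∑ p ∈ s, (c p * ((4 : ℂ) ^ t
          * ∏ k ∈ Finset.range t, (((m p : ℂ) - (k : ℂ)) * ((n p : ℂ) - (k : ℂ)))))
          * F (m p - (t : ℤ)) (n p - (t : ℤ)) w) :=
      ev_of_ne hz fun w hw => ih w hw
    rw [lap_congr h1]
    rw [lap_CF s _ (fun p => m p - (t : ℤ)) (fun p => n p - (t : ℤ)) hz]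
    refine Finset.sum_congr rfl fun p _ => ?_
    have e1 : m p - (t : ℤ) - 1 = m p - ((t + 1 : ℕ) : ℤ) := by push_cast; ring
    have e2 : n p - (t : ℤ) - 1 = n p - ((t + 1 : ℕ) : ℤ) := by push_cast; ring
    rw [e1, e2, Finset.prod_range_succ]
    push_cast
    ring

lemma expand_pow (K : ℕ) (a b : ℂ) :
    (a + b - a * b) ^ K
      = ∑ p ∈ Finset.range (K + 1) ×ˢ Finset.range (K + 1),
          (((K.choose p.1 * (K - p.1).choose p.2 : ℕ) : ℂ) * (-1) ^ p.2)
            * (a ^ (p.1 + p.2) * b ^ (K - p.1)) := by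
  have h0 : a + b - a * b = a + b * (1 - a) := by ring
  rw [h0, add_pow, Finset.sum_product]
  refine Finset.sum_congr rfl fun i hi => ?_
  have hiK : i ≤ K := Finset.mem_range_succ_iff.mp hi
  have h1 : (1 - a) ^ (K - i)
      = ∑ l ∈ Finset.range (K + 1), (-1 : ℂ) ^ l * a ^ l * ((K - i).choose l : ℂ) := by
    have e : (1 : ℂ) - a = -a + 1 := by ring
    rw [e, add_pow]
    rw [Finset.sum_subset (Finset.range_subset_range.mpr (by omega : K - i + 1 ≤ K + 1))]
    · refine Finset.sum_congr rfl fun l _ => ?_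
      rw [one_pow, neg_pow]; ring
    · intro l hl hnl
      have hlt : K - i < l := by
        simp only [Finset.mem_range] at hl hnl; omega
      simp [Nat.choose_eq_zero_of_lt hlt]
  rw [mul_pow, h1, Finset.mul_sum, Finset.mul_sum, Finset.sum_mul]
  refine Finset.sum_congr rfl fun l _ => ?_
  rw [pow_add]
  push_cast
  ring

lemma contDiffAt_zpow' (k : ℤ) {x : ℂ} (hx : x ≠ 0) :
    ContDiffAt ℂ ⊤ (fun u : ℂ => u ^ k) x := by
  rcases le_or_gt 0 k with h | h
  · lift k to ℕ using h
    have : (fun u : ℂ => u ^ (k : ℤ)) = fun u : ℂ => u ^ k := by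
      funext u; rw [zpow_natCast]
    rw [this]
    exact (contDiff_id.pow k).contDiffAt
  · have hk : (fun u : ℂ => u ^ k) = fun u : ℂ => (u ^ (-k).toNat)⁻¹ := by
      funext u
      rw [← zpow_natCast, Int.toNat_of_nonneg (by omega), zpow_neg]
      simp
    rw [hk]
    exact ((contDiff_id.pow _).contDiffAt).inv (pow_ne_zero _ hx)

lemma contDiffAt_F (m n : ℤ) {z : ℂ} (hz : z ≠ 1) : ContDiffAt ℝ (⊤ : ℕ∞) (F m n) z := by
  have hw : (1 : ℂ) - z ≠ 0 := sub_ne_zero_of_ne (Ne.symm hz)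
  have hz1 : ∀ k : ℤ, ContDiffAt ℝ (⊤ : ℕ∞) (fun w : ℂ => (1 - w) ^ k) z := by
    intro k
    have hbase : ContDiffAt ℂ ⊤ (fun w : ℂ => 1 - w) z :=
      (contDiff_const.sub contDiff_id).contDiffAt
    exact ((((contDiffAt_zpow' k hw).comp z hbase)).restrict_scalars ℝ).of_le le_top
  have h2 : ContDiffAt ℝ (⊤ : ℕ∞) (fun w : ℂ => ((starRingEnd ℂ) (1 - w)) ^ n) z := by
    have e : (fun w : ℂ => ((starRingEnd ℂ) (1 - w)) ^ n)
        = fun w : ℂ => Complex.conjCLE.toContinuousLinearMap ((1 - w) ^ n) := by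
      funext w; simp [map_zpow₀, Complex.conjCLE_apply]
    rw [e]
    exact (Complex.conjCLE.toContinuousLinearMap.contDiff.contDiffAt).comp z (hz1 n)
  exact (hz1 m).mul h2

lemma U_eq (N j : ℕ) {z : ℂ} (hz : z ≠ 1) :
    Ukernel j N z
      = ∑ p ∈ Finset.range (N + j - 1 + 1) ×ˢ Finset.range (N + j - 1 + 1),
          ((((N + j - 1).choose p.1 * ((N + j - 1) - p.1).choose p.2 : ℕ) : ℂ) * (-1) ^ p.2)
            * F ((p.1 : ℤ) + (p.2 : ℤ) - (j : ℤ))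
                (((N + j - 1 : ℕ) : ℤ) - (p.1 : ℤ) - (j : ℤ)) z := by
  set K := N + j - 1 with hK
  have hw : (1 : ℂ) - z ≠ 0 := sub_ne_zero_of_ne (Ne.symm hz)
  have hcw : (starRingEnd ℂ) (1 - z) ≠ 0 := by
    simp only [ne_eq, map_sub, map_one, sub_eq_zero]
    intro h
    exact hz (by simpa using congrArg (starRingEnd ℂ) h.symm)
  have e1 : ((1 - ‖z‖ ^ 2 : ℝ) : ℂ)
      = (1 - z) + (starRingEnd ℂ) (1 - z) - (1 - z) * (starRingEnd ℂ) (1 - z) := by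
    have h : ((‖z‖ : ℝ) : ℂ) ^ 2 = z * (starRingEnd ℂ) z := by
      rw [← Complex.ofReal_pow, Complex.sq_norm, Complex.mul_conj]
    push_cast
    rw [h, map_sub, map_one]
    ring
  have e2 : ((‖1 - z‖ : ℝ) : ℂ) ^ (2 * j)
      = ((1 - z) * (starRingEnd ℂ) (1 - z)) ^ j := by
    rw [pow_mul]
    congr 1
    rw [← Complex.ofReal_pow, Complex.sq_norm, Complex.mul_conj]
  have hU : Ukernel j N z
      = (((1 - z) + (starRingEnd ℂ) (1 - z) - (1 - z) * (starRingEnd ℂ) (1 - z)) ^ K)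
          / ((1 - z) * (starRingEnd ℂ) (1 - z)) ^ j := by
    rw [Ukernel, Complex.ofReal_div, Complex.ofReal_pow, Complex.ofReal_pow, e1, e2]
  rw [hU, expand_pow, Finset.sum_div]
  refine Finset.sum_congr rfl fun p hp => ?_
  obtain ⟨hp1, hp2⟩ := Finset.mem_product.mp hp
  have hiK : p.1 ≤ K := Finset.mem_range_succ_iff.mp hp1
  have hzp : ∀ (u : ℂ), u ≠ 0 → ∀ (a b : ℕ), u ^ a / u ^ b = u ^ ((a : ℤ) - (b : ℤ)) := by
    intro u hu a b
    rw [zpow_sub₀ hu, zpow_natCast, zpow_natCast]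
  rw [mul_pow, mul_div_assoc, ← div_mul_div_comm, hzp _ hw, hzp _ hcw,
    show ((p.1 + p.2 : ℕ) : ℤ) - (j : ℤ) = (p.1 : ℤ) + (p.2 : ℤ) - (j : ℤ) by push_cast; ring,
    show ((K - p.1 : ℕ) : ℤ) - (j : ℤ) = ((K : ℕ) : ℤ) - (p.1 : ℤ) - (j : ℤ) by omega]
  rfl

end Stmt16

open Stmt16 in
/-- the kernels `U_{j,N}` are `N`-harmonic on `ℂ \ {1}`. -/
theorem stmt_16 (N : ℕ) (hN : 0 < N) (j : ℕ) (hj : j ≤ N) :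
    NHarmonicOn N (Ukernel j N) ({(1 : ℂ)}ᶜ) := by
  refine ⟨?_, ?_⟩
  · intro z hz0
    have hz : z ≠ 1 := by simpa using hz0
    have hCF : ContDiffAt ℝ (⊤ : ℕ∞) (fun w => ∑ p ∈ Finset.range (N + j - 1 + 1) ×ˢ Finset.range (N + j - 1 + 1),
        ((((N + j - 1).choose p.1 * ((N + j - 1) - p.1).choose p.2 : ℕ) : ℂ) * (-1) ^ p.2)
          * F ((p.1 : ℤ) + (p.2 : ℤ) - (j : ℤ))
              (((N + j - 1 : ℕ) : ℤ) - (p.1 : ℤ) - (j : ℤ)) w) z :=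
      ContDiffAt.sum fun p _ => contDiffAt_const.mul (contDiffAt_F _ _ hz)
    exact (hCF.congr_of_eventuallyEq (ev_of_ne hz fun w hw => U_eq N j hw)).contDiffWithinAt
  · intro z hz0
    have hz : z ≠ 1 := by simpa using hz0
    have e1 := lapIter_congr N (ev_of_ne hz fun w hw => U_eq N j hw)
    have e2 := lapIter_CF N (Finset.range (N + j - 1 + 1) ×ˢ Finset.range (N + j - 1 + 1))
      (fun p => (((N + j - 1).choose p.1 * ((N + j - 1) - p.1).choose p.2 : ℕ) : ℂ) * (-1) ^ p.2)
      (fun p => (p.1 : ℤ) + (p.2 : ℤ) - (j : ℤ))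
      (fun p => ((N + j - 1 : ℕ) : ℤ) - (p.1 : ℤ) - (j : ℤ)) z hz
    refine e1.trans (e2.trans ?_)
    refine Finset.sum_eq_zero fun p hp => ?_
    obtain ⟨hp1, hp2⟩ := Finset.mem_product.mp hp
    have hi : p.1 ≤ N + j - 1 := Finset.mem_range_succ_iff.mp hp1
    have hl : p.2 ≤ N + j - 1 := Finset.mem_range_succ_iff.mp hp2
    rcases le_or_gt (p.1 + p.2) (N + j - 1) with hil | hil
    · have hprod : (∏ k ∈ Finset.range N,
          ((((p.1 : ℤ) + (p.2 : ℤ) - (j : ℤ) : ℤ) : ℂ) - (k : ℂ))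
            * ((((((N + j - 1 : ℕ) : ℤ) - (p.1 : ℤ) - (j : ℤ)) : ℤ) : ℂ) - (k : ℂ))) = 0 := by
        rcases lt_or_ge p.1 N with hiN | hiN
        · refine Finset.prod_eq_zero (Finset.mem_range.mpr (show N - 1 - p.1 < N by omega)) ?_
          have hn : (((N + j - 1 : ℕ) : ℤ) - (p.1 : ℤ) - (j : ℤ)) = ((N - 1 - p.1 : ℕ) : ℤ) := by
            omega
          rw [mul_eq_zero]
          right
          rw [hn]
          push_cast
          ring
        · refine Finset.prod_eq_zero (Finset.mem_range.mpr (show p.1 + p.2 - j < N by omega)) ?_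
          have hm : ((p.1 : ℤ) + (p.2 : ℤ) - (j : ℤ)) = ((p.1 + p.2 - j : ℕ) : ℤ) := by omega
          rw [mul_eq_zero]
          left
          rw [hm]
          push_cast
          ring
      rw [hprod]
      ring
    · have hc : ((N + j - 1) - p.1).choose p.2 = 0 := Nat.choose_eq_zero_of_lt (by omega)
      simp [hc]
end
end

section
/- Let n be a positive integer. Then, as operators on smooth functions on the unit disk 𝔻, one has the factorization L₀ L₁ ⋯ L_{n-1} = M^n Δ^n, where the composition on the left is taken in the indicated order; that is, for every smooth u : 𝔻 → ℂ, (L₀∘L₁∘⋯∘L_{n-1})[u] = (1-|z|²)^n · Δ^n u(z) for all z ∈ 𝔻. In particular, if a smooth function v on 𝔻 satisfies L_{n-1}[v] = 0 on 𝔻, then v is n-harmonic (Δ^n v = 0) on 𝔻. -/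
open MeasureTheory Metric Complex
open scoped ENNReal

noncomputable section

/-! ### Auxiliary development -/

namespace Stmt18Aux

local notation "U" => unitDisk

/-- `∞`-smoothness on the unit disk. -/
def Sm (f : ℂ → ℂ) : Prop := ContDiffOn ℝ ((⊤ : ℕ∞) : WithTop ℕ∞) f U

lemma hUo : IsOpen U := Metric.isOpen_ball

lemma Sm.diffAt {f : ℂ → ℂ} (hf : Sm f) {z : ℂ} (hz : z ∈ U) : DifferentiableAt ℝ f z :=
  (hf.contDiffAt (hUo.mem_nhds hz)).differentiableAt (by simp)

lemma Sm.pdx {f : ℂ → ℂ} (hf : Sm f) : Sm (pdx f) := by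
  have h := hf.fderiv_of_isOpen hUo (m := ((⊤:ℕ∞) : WithTop ℕ∞)) (by exact_mod_cast le_rfl)
  exact h.clm_apply contDiffOn_const

lemma Sm.pdy {f : ℂ → ℂ} (hf : Sm f) : Sm (pdy f) := by
  have h := hf.fderiv_of_isOpen hUo (m := ((⊤:ℕ∞) : WithTop ℕ∞)) (by exact_mod_cast le_rfl)
  exact h.clm_apply contDiffOn_const

lemma Sm.add {f g : ℂ → ℂ} (hf : Sm f) (hg : Sm g) : Sm (fun w => f w + g w) := ContDiffOn.add hf hg
lemma Sm.sub {f g : ℂ → ℂ} (hf : Sm f) (hg : Sm g) : Sm (fun w => f w - g w) := ContDiffOn.sub hf hg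
lemma Sm.mul {f g : ℂ → ℂ} (hf : Sm f) (hg : Sm g) : Sm (fun w => f w * g w) :=
  ContDiffOn.mul hf hg
lemma Sm.const (c : ℂ) : Sm (fun _ => c) := contDiffOn_const
lemma Sm.cmul {f : ℂ → ℂ} (c : ℂ) (hf : Sm f) : Sm (fun w => c * f w) :=
  (Sm.const c).mul hf

lemma Sm.lap {f : ℂ → ℂ} (hf : Sm f) : Sm (lap f) := Sm.add hf.pdx.pdx hf.pdy.pdy

-- congruence lemmas
lemma pdx_congr {f g : ℂ → ℂ} (h : ∀ w ∈ U, f w = g w) {z : ℂ} (hz : z ∈ U) :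
    pdx f z = pdx g z := by
  have : f =ᶠ[nhds z] g := Filter.eventuallyEq_of_mem (hUo.mem_nhds hz) h
  simp only [pdx, this.fderiv_eq]

lemma pdy_congr {f g : ℂ → ℂ} (h : ∀ w ∈ U, f w = g w) {z : ℂ} (hz : z ∈ U) :
    pdy f z = pdy g z := by
  have : f =ᶠ[nhds z] g := Filter.eventuallyEq_of_mem (hUo.mem_nhds hz) h
  simp only [pdy, this.fderiv_eq]

lemma lap_congr {f g : ℂ → ℂ} (h : ∀ w ∈ U, f w = g w) {z : ℂ} (hz : z ∈ U) :
    lap f z = lap g z := by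
  show pdx (pdx f) z + pdy (pdy f) z = pdx (pdx g) z + pdy (pdy g) z
  rw [pdx_congr (fun w hw => pdx_congr h hw) hz, pdy_congr (fun w hw => pdy_congr h hw) hz]

lemma lapIter_congr {f g : ℂ → ℂ} (m : ℕ) (h : ∀ w ∈ U, f w = g w) {z : ℂ} (hz : z ∈ U) :
    lap^[m] f z = lap^[m] g z := by
  induction m generalizing f g with
  | zero => simpa using h z hz
  | succ m ih =>
    rw [Function.iterate_succ_apply, Function.iterate_succ_apply]
    exact ih (fun w hw => lap_congr h hw)

-- arithmetic for pdx/pdy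
lemma pdx_add {f g : ℂ → ℂ} {z : ℂ} (hf : DifferentiableAt ℝ f z) (hg : DifferentiableAt ℝ g z) :
    pdx (fun w => f w + g w) z = pdx f z + pdx g z := by
  simp only [pdx, fderiv_fun_add hf hg]; rfl
lemma pdy_add {f g : ℂ → ℂ} {z : ℂ} (hf : DifferentiableAt ℝ f z) (hg : DifferentiableAt ℝ g z) :
    pdy (fun w => f w + g w) z = pdy f z + pdy g z := by
  simp only [pdy, fderiv_fun_add hf hg]; rfl
lemma pdx_sub {f g : ℂ → ℂ} {z : ℂ} (hf : DifferentiableAt ℝ f z) (hg : DifferentiableAt ℝ g z) :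
    pdx (fun w => f w - g w) z = pdx f z - pdx g z := by
  simp only [pdx, fderiv_fun_sub hf hg]; rfl
lemma pdy_sub {f g : ℂ → ℂ} {z : ℂ} (hf : DifferentiableAt ℝ f z) (hg : DifferentiableAt ℝ g z) :
    pdy (fun w => f w - g w) z = pdy f z - pdy g z := by
  simp only [pdy, fderiv_fun_sub hf hg]; rfl
lemma pdx_const (c : ℂ) (z : ℂ) : pdx (fun _ => c) z = 0 := by simp [pdx]
lemma pdy_const (c : ℂ) (z : ℂ) : pdy (fun _ => c) z = 0 := by simp [pdy]
lemma pdx_neg (f : ℂ → ℂ) (z : ℂ) : pdx (fun w => -f w) z = -pdx f z := by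
  simp only [pdx, fderiv_fun_neg]; rfl
lemma pdy_neg (f : ℂ → ℂ) (z : ℂ) : pdy (fun w => -f w) z = -pdy f z := by
  simp only [pdy, fderiv_fun_neg]; rfl
lemma pdx_const_mul {f : ℂ → ℂ} {z : ℂ} (c : ℂ) (hf : DifferentiableAt ℝ f z) :
    pdx (fun w => c * f w) z = c * pdx f z := by
  simp only [pdx, fderiv_const_mul hf c]; rfl
lemma pdy_const_mul {f : ℂ → ℂ} {z : ℂ} (c : ℂ) (hf : DifferentiableAt ℝ f z) :
    pdy (fun w => c * f w) z = c * pdy f z := by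
  simp only [pdy, fderiv_const_mul hf c]; rfl
lemma pdx_mul {f g : ℂ → ℂ} {z : ℂ} (hf : DifferentiableAt ℝ f z) (hg : DifferentiableAt ℝ g z) :
    pdx (fun w => f w * g w) z = pdx f z * g z + f z * pdx g z := by
  simp only [pdx, fderiv_fun_mul hf hg]
  simp [ContinuousLinearMap.add_apply, ContinuousLinearMap.smul_apply, smul_eq_mul]
  ring
lemma pdy_mul {f g : ℂ → ℂ} {z : ℂ} (hf : DifferentiableAt ℝ f z) (hg : DifferentiableAt ℝ g z) :
    pdy (fun w => f w * g w) z = pdy f z * g z + f z * pdy g z := by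
  simp only [pdy, fderiv_fun_mul hf hg]
  simp [ContinuousLinearMap.add_apply, ContinuousLinearMap.smul_apply, smul_eq_mul]
  ring

-- coordinate functions
/-- Real part, as a complex-valued function. -/
def Xc : ℂ → ℂ := fun z => (z.re : ℂ)
/-- Imaginary part, as a complex-valued function. -/
def Yc : ℂ → ℂ := fun z => (z.im : ℂ)
/-- The weight `1 - |z|²` as a polynomial in the coordinates. -/
def Wc : ℂ → ℂ := fun z => 1 - Xc z * Xc z - Yc z * Yc z
/-- The Euler-type operator `x ∂x + y ∂y`. -/
def Dop (f : ℂ → ℂ) : ℂ → ℂ := fun z => Xc z * pdx f z + Yc z * pdy f z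

lemma Xc_eq : Xc = ⇑(Complex.ofRealCLM.comp Complex.reCLM) := rfl
lemma Yc_eq : Yc = ⇑(Complex.ofRealCLM.comp Complex.imCLM) := rfl
lemma Sm.X : Sm Xc := by rw [Xc_eq]; exact (Complex.ofRealCLM.comp Complex.reCLM).contDiff.contDiffOn
lemma Sm.Y : Sm Yc := by rw [Yc_eq]; exact (Complex.ofRealCLM.comp Complex.imCLM).contDiff.contDiffOn
lemma Xc_diff (z : ℂ) : DifferentiableAt ℝ Xc z := by
  rw [Xc_eq]; exact (Complex.ofRealCLM.comp Complex.reCLM).differentiableAt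
lemma Yc_diff (z : ℂ) : DifferentiableAt ℝ Yc z := by
  rw [Yc_eq]; exact (Complex.ofRealCLM.comp Complex.imCLM).differentiableAt
lemma fderiv_Xc (z : ℂ) : fderiv ℝ Xc z = Complex.ofRealCLM.comp Complex.reCLM := by
  rw [Xc_eq]; exact (Complex.ofRealCLM.comp Complex.reCLM).fderiv
lemma fderiv_Yc (z : ℂ) : fderiv ℝ Yc z = Complex.ofRealCLM.comp Complex.imCLM := by
  rw [Yc_eq]; exact (Complex.ofRealCLM.comp Complex.imCLM).fderiv
lemma pdx_X (z : ℂ) : pdx Xc z = 1 := by simp [pdx, fderiv_Xc]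
lemma pdy_X (z : ℂ) : pdy Xc z = 0 := by simp [pdy, fderiv_Xc]
lemma pdx_Y (z : ℂ) : pdx Yc z = 0 := by simp [pdx, fderiv_Yc]
lemma pdy_Y (z : ℂ) : pdy Yc z = 1 := by simp [pdy, fderiv_Yc]

lemma Sm.W : Sm Wc := ((Sm.const 1).sub (Sm.X.mul Sm.X)).sub (Sm.Y.mul Sm.Y)
lemma Wc_diff (z : ℂ) : DifferentiableAt ℝ Wc z :=
  (((differentiableAt_const _).sub ((Xc_diff z).mul (Xc_diff z))).sub
    ((Yc_diff z).mul (Yc_diff z)))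
lemma Sm.Dop {f : ℂ → ℂ} (hf : Sm f) : Sm (Dop f) := (Sm.X.mul hf.pdx).add (Sm.Y.mul hf.pdy)

lemma pdx_W (z : ℂ) : pdx Wc z = -(2 * Xc z) := by
  have h1 : pdx (fun w => 1 - Xc w * Xc w) z = -(2 * Xc z) := by
    rw [pdx_sub (g := fun w => Xc w * Xc w) (differentiableAt_const _) ((Xc_diff z).mul (Xc_diff z)),
      pdx_const, pdx_mul (Xc_diff z) (Xc_diff z), pdx_X]; ring
  have : pdx Wc z = pdx (fun w => 1 - Xc w * Xc w) z - pdx (fun w => Yc w * Yc w) z :=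
    pdx_sub ((differentiableAt_const _).sub ((Xc_diff z).mul (Xc_diff z)))
      ((Yc_diff z).mul (Yc_diff z))
  rw [this, h1, pdx_mul (Yc_diff z) (Yc_diff z), pdx_Y]; ring
lemma pdy_W (z : ℂ) : pdy Wc z = -(2 * Yc z) := by
  have h1 : pdy (fun w => 1 - Xc w * Xc w) z = 0 := by
    rw [pdy_sub (g := fun w => Xc w * Xc w) (differentiableAt_const _) ((Xc_diff z).mul (Xc_diff z)),
      pdy_const, pdy_mul (Xc_diff z) (Xc_diff z), pdy_X]; ring
  have : pdy Wc z = pdy (fun w => 1 - Xc w * Xc w) z - pdy (fun w => Yc w * Yc w) z :=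
    pdy_sub ((differentiableAt_const _).sub ((Xc_diff z).mul (Xc_diff z)))
      ((Yc_diff z).mul (Yc_diff z))
  rw [this, h1, pdy_mul (Yc_diff z) (Yc_diff z), pdy_Y]; ring

lemma lap_W (z : ℂ) : lap Wc z = -4 := by
  show pdx (pdx Wc) z + pdy (pdy Wc) z = -4
  rw [show pdx Wc = fun w => -(2 * Xc w) from funext pdx_W,
    show pdy Wc = fun w => -(2 * Yc w) from funext pdy_W,
    pdx_neg, pdy_neg, pdx_const_mul 2 (Xc_diff z), pdy_const_mul 2 (Yc_diff z), pdx_X, pdy_Y]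
  ring

lemma lap_X (z : ℂ) : lap Xc z = 0 := by
  show pdx (pdx Xc) z + pdy (pdy Xc) z = 0
  rw [show pdx Xc = fun _ => (1:ℂ) from funext pdx_X,
    show pdy Xc = fun _ => (0:ℂ) from funext pdy_X, pdx_const, pdy_const]; ring
lemma lap_Y (z : ℂ) : lap Yc z = 0 := by
  show pdx (pdx Yc) z + pdy (pdy Yc) z = 0
  rw [show pdx Yc = fun _ => (0:ℂ) from funext pdx_Y,
    show pdy Yc = fun _ => (1:ℂ) from funext pdy_Y, pdx_const, pdy_const]; ring

-- symmetry of second derivatives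
lemma pdx_pdy_symm {f : ℂ → ℂ} (hf : Sm f) {z : ℂ} (hz : z ∈ U) :
    pdx (pdy f) z = pdy (pdx f) z := by
  have hca : ContDiffAt ℝ ((⊤:ℕ∞) : WithTop ℕ∞) f z := hf.contDiffAt (hUo.mem_nhds hz)
  have hsym : IsSymmSndFDerivAt ℝ f z := hca.isSymmSndFDerivAt
    (by exact le_trans (by rw [minSmoothness_of_isRCLikeNormedField]; norm_cast) (WithTop.coe_le_coe.mpr (le_top : (2:ℕ∞) ≤ ⊤)))
  have hd : DifferentiableAt ℝ (fderiv ℝ f) z := by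
    have := (hca.fderiv_right (m := ((⊤:ℕ∞) : WithTop ℕ∞)) (by exact_mod_cast le_rfl))
    exact this.differentiableAt (by simp)
  have e1 : pdy f = fun w => (fderiv ℝ f w) Complex.I := rfl
  have e2 : pdx f = fun w => (fderiv ℝ f w) (1:ℂ) := rfl
  have h1 : pdx (pdy f) z = fderiv ℝ (fderiv ℝ f) z 1 Complex.I := by
    show fderiv ℝ (pdy f) z 1 = _
    rw [e1, fderiv_clm_apply hd (differentiableAt_const _)]
    simp
  have h2 : pdy (pdx f) z = fderiv ℝ (fderiv ℝ f) z Complex.I 1 := by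
    show fderiv ℝ (pdx f) z Complex.I = _
    rw [e2, fderiv_clm_apply hd (differentiableAt_const _)]
    simp
  rw [h1, h2, hsym 1 Complex.I]


-- pointwise linearity of the Laplacian
lemma lap_add {f g : ℂ → ℂ} (hf : Sm f) (hg : Sm g) {z : ℂ} (hz : z ∈ U) :
    lap (fun w => f w + g w) z = lap f z + lap g z := by
  have ex : ∀ w ∈ U, pdx (fun v => f v + g v) w = pdx f w + pdx g w :=
    fun w hw => pdx_add (hf.diffAt hw) (hg.diffAt hw)
  have ey : ∀ w ∈ U, pdy (fun v => f v + g v) w = pdy f w + pdy g w :=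
    fun w hw => pdy_add (hf.diffAt hw) (hg.diffAt hw)
  show pdx (pdx fun w => f w + g w) z + pdy (pdy fun w => f w + g w) z = _
  rw [pdx_congr ex hz, pdy_congr ey hz,
    pdx_add (hf.pdx.diffAt hz) (hg.pdx.diffAt hz),
    pdy_add (hf.pdy.diffAt hz) (hg.pdy.diffAt hz)]
  show _ = (pdx (pdx f) z + pdy (pdy f) z) + (pdx (pdx g) z + pdy (pdy g) z)
  ring

lemma lap_cmul (c : ℂ) {f : ℂ → ℂ} (hf : Sm f) {z : ℂ} (hz : z ∈ U) :
    lap (fun w => c * f w) z = c * lap f z := by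
  have ex : ∀ w ∈ U, pdx (fun v => c * f v) w = c * pdx f w :=
    fun w hw => pdx_const_mul c (hf.diffAt hw)
  have ey : ∀ w ∈ U, pdy (fun v => c * f v) w = c * pdy f w :=
    fun w hw => pdy_const_mul c (hf.diffAt hw)
  show pdx (pdx fun w => c * f w) z + pdy (pdy fun w => c * f w) z = _
  rw [pdx_congr ex hz, pdy_congr ey hz,
    pdx_const_mul c (hf.pdx.diffAt hz), pdy_const_mul c (hf.pdy.diffAt hz)]
  show _ = c * (pdx (pdx f) z + pdy (pdy f) z)
  ring

lemma lap_lin (a b c : ℂ) {f g h : ℂ → ℂ} (hf : Sm f) (hg : Sm g) (hh : Sm h)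
    {z : ℂ} (hz : z ∈ U) :
    lap (fun w => a * f w + b * g w + c * h w) z = a * lap f z + b * lap g z + c * lap h z := by
  rw [lap_add (Sm.add (Sm.cmul a hf) (Sm.cmul b hg)) (Sm.cmul c hh) hz,
    lap_add (Sm.cmul a hf) (Sm.cmul b hg) hz,
    lap_cmul a hf hz, lap_cmul b hg hz, lap_cmul c hh hz]

lemma lapIter_lin (m : ℕ) (a b c : ℂ) {f g h : ℂ → ℂ} (hf : Sm f) (hg : Sm g) (hh : Sm h)
    {z : ℂ} (hz : z ∈ U) :
    lap^[m] (fun w => a * f w + b * g w + c * h w) z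
      = a * lap^[m] f z + b * lap^[m] g z + c * lap^[m] h z := by
  induction m generalizing f g h with
  | zero => simp
  | succ m ih =>
    rw [Function.iterate_succ_apply, Function.iterate_succ_apply,
      Function.iterate_succ_apply, Function.iterate_succ_apply]
    have e1 : lap^[m] (lap fun w => a * f w + b * g w + c * h w) z
        = lap^[m] (fun w => a * lap f w + b * lap g w + c * lap h w) z :=
      lapIter_congr m (fun w hw => lap_lin a b c hf hg hh hw) hz
    rw [e1]
    exact ih hf.lap hg.lap hh.lap

-- second order Leibniz rule
lemma lap_mul {g f : ℂ → ℂ} (hg : Sm g) (hf : Sm f) {z : ℂ} (hz : z ∈ U) :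
    lap (fun w => g w * f w) z
      = lap g z * f z + 2 * (pdx g z * pdx f z + pdy g z * pdy f z) + g z * lap f z := by
  have ex : ∀ w ∈ U, pdx (fun v => g v * f v) w = pdx g w * f w + g w * pdx f w :=
    fun w hw => pdx_mul (hg.diffAt hw) (hf.diffAt hw)
  have ey : ∀ w ∈ U, pdy (fun v => g v * f v) w = pdy g w * f w + g w * pdy f w :=
    fun w hw => pdy_mul (hg.diffAt hw) (hf.diffAt hw)
  have hxx : pdx (pdx fun v => g v * f v) z
      = (pdx (pdx g) z * f z + pdx g z * pdx f z) + (pdx g z * pdx f z + g z * pdx (pdx f) z) := by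
    rw [pdx_congr ex hz,
      pdx_add (f := fun w => pdx g w * f w) (g := fun w => g w * pdx f w) ((hg.pdx.diffAt hz).mul (hf.diffAt hz)) ((hg.diffAt hz).mul (hf.pdx.diffAt hz)),
      pdx_mul (hg.pdx.diffAt hz) (hf.diffAt hz), pdx_mul (hg.diffAt hz) (hf.pdx.diffAt hz)]
  have hyy : pdy (pdy fun v => g v * f v) z
      = (pdy (pdy g) z * f z + pdy g z * pdy f z) + (pdy g z * pdy f z + g z * pdy (pdy f) z) := by
    rw [pdy_congr ey hz,
      pdy_add (f := fun w => pdy g w * f w) (g := fun w => g w * pdy f w) ((hg.pdy.diffAt hz).mul (hf.diffAt hz)) ((hg.diffAt hz).mul (hf.pdy.diffAt hz)),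
      pdy_mul (hg.pdy.diffAt hz) (hf.diffAt hz), pdy_mul (hg.diffAt hz) (hf.pdy.diffAt hz)]
  show pdx (pdx fun w => g w * f w) z + pdy (pdy fun w => g w * f w) z = _
  rw [hxx, hyy]
  show _ = (pdx (pdx g) z + pdy (pdy g) z) * f z + 2 * (pdx g z * pdx f z + pdy g z * pdy f z)
    + g z * (pdx (pdx f) z + pdy (pdy f) z)
  ring

-- commuting lap with first derivatives
lemma lap_pdx_comm {f : ℂ → ℂ} (hf : Sm f) {z : ℂ} (hz : z ∈ U) :
    lap (pdx f) z = pdx (lap f) z := by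
  have h1 : pdy (pdy (pdx f)) z = pdx (pdy (pdy f)) z := by
    rw [pdy_congr (fun w hw => (pdx_pdy_symm hf hw).symm) hz]
    exact (pdx_pdy_symm hf.pdy hz).symm
  have h2 : pdx (lap f) z = pdx (pdx (pdx f)) z + pdx (pdy (pdy f)) z := by
    have e : ∀ w ∈ U, lap f w = pdx (pdx f) w + pdy (pdy f) w := fun w _ => rfl
    rw [pdx_congr e hz]
    exact pdx_add (hf.pdx.pdx.diffAt hz) (hf.pdy.pdy.diffAt hz)
  show pdx (pdx (pdx f)) z + pdy (pdy (pdx f)) z = _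
  rw [h2, h1]

lemma lap_pdy_comm {f : ℂ → ℂ} (hf : Sm f) {z : ℂ} (hz : z ∈ U) :
    lap (pdy f) z = pdy (lap f) z := by
  have h1 : pdx (pdx (pdy f)) z = pdy (pdx (pdx f)) z := by
    rw [pdx_congr (fun w hw => pdx_pdy_symm hf hw) hz]
    exact pdx_pdy_symm hf.pdx hz
  have h2 : pdy (lap f) z = pdy (pdx (pdx f)) z + pdy (pdy (pdy f)) z := by
    have e : ∀ w ∈ U, lap f w = pdx (pdx f) w + pdy (pdy f) w := fun w _ => rfl
    rw [pdy_congr e hz]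
    exact pdy_add (hf.pdx.pdx.diffAt hz) (hf.pdy.pdy.diffAt hz)
  show pdx (pdx (pdy f)) z + pdy (pdy (pdy f)) z = _
  rw [h2, h1]

-- Identity A : Δ(W·f) = W·Δf − 4 D f − 4 f
lemma lap_Wmul {f : ℂ → ℂ} (hf : Sm f) {z : ℂ} (hz : z ∈ U) :
    lap (fun w => Wc w * f w) z = Wc z * lap f z - 4 * Dop f z - 4 * f z := by
  rw [lap_mul Sm.W hf hz, lap_W z, pdx_W z, pdy_W z]
  show _ = Wc z * lap f z - 4 * (Xc z * pdx f z + Yc z * pdy f z) - 4 * f z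
  ring

-- Identity B : Δ(D f) = D(Δ f) + 2 Δ f
lemma lap_Dop {f : ℂ → ℂ} (hf : Sm f) {z : ℂ} (hz : z ∈ U) :
    lap (Dop f) z = Dop (lap f) z + 2 * lap f z := by
  have h1 : lap (Dop f) z
      = lap (fun w => Xc w * pdx f w) z + lap (fun w => Yc w * pdy f w) z :=
    lap_add (Sm.X.mul hf.pdx) (Sm.Y.mul hf.pdy) hz
  rw [h1, lap_mul Sm.X hf.pdx hz, lap_mul Sm.Y hf.pdy hz, lap_X, lap_Y,
    pdx_X, pdy_X, pdx_Y, pdy_Y, lap_pdx_comm hf hz, lap_pdy_comm hf hz]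
  show _ = (Xc z * pdx (lap f) z + Yc z * pdy (lap f) z) + 2 * lap f z
  have hLz : lap f z = pdx (pdx f) z + pdy (pdy f) z := rfl
  rw [hLz]
  ring

-- Identity C : Δ^m (D f) = D (Δ^m f) + 2 m Δ^m f
lemma lapIter_Dop (m : ℕ) {f : ℂ → ℂ} (hf : Sm f) {z : ℂ} (hz : z ∈ U) :
    lap^[m] (Dop f) z = Dop (lap^[m] f) z + (2 * (m:ℂ)) * lap^[m] f z := by
  induction m generalizing f with
  | zero => simp
  | succ m ih =>
    have e1 : lap^[m] (lap (Dop f)) z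
        = lap^[m] (fun w => 1 * Dop (lap f) w + 2 * lap f w + 0 * lap f w) z :=
      lapIter_congr m (fun w hw => by rw [lap_Dop hf hw]; ring) hz
    rw [Function.iterate_succ_apply, e1,
      lapIter_lin m 1 2 0 hf.lap.Dop hf.lap hf.lap hz, ih hf.lap]
    simp only [← Function.iterate_succ_apply]
    push_cast
    ring

-- Identity E : Δ^{m+1}(W f) = W Δ^{m+1} f − 4(m+1) D Δ^m f − 4(m+1)² Δ^m f
lemma lapIter_Wmul (m : ℕ) {f : ℂ → ℂ} (hf : Sm f) {z : ℂ} (hz : z ∈ U) :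
    lap^[m+1] (fun w => Wc w * f w) z
      = Wc z * lap^[m+1] f z - 4 * ((m:ℂ)+1) * Dop (lap^[m] f) z
        - 4 * ((m:ℂ)+1)^2 * lap^[m] f z := by
  induction m generalizing f with
  | zero =>
    simp only [Nat.cast_zero, zero_add, Function.iterate_one, Function.iterate_zero_apply]
    rw [lap_Wmul hf hz]
    ring
  | succ m ih =>
    have e1 : lap^[m+1] (lap (fun w => Wc w * f w)) z
        = lap^[m+1] (fun w => 1 * (Wc w * lap f w) + (-4) * Dop f w + (-4) * f w) z :=
      lapIter_congr (m+1) (fun w hw => by rw [lap_Wmul hf hw]; ring) hz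
    rw [Function.iterate_succ_apply, e1,
      lapIter_lin (m+1) 1 (-4) (-4) (Sm.W.mul hf.lap) hf.Dop hf hz,
      ih hf.lap, lapIter_Dop (m+1) hf hz]
    simp only [← Function.iterate_succ_apply]
    push_cast
    ring


lemma W_eq (z : ℂ) : ((1 - ‖z‖ ^ 2 : ℝ) : ℂ) = Wc z := by
  simp only [Wc, Xc, Yc]
  push_cast [Complex.sq_norm, Complex.normSq_apply]
  ring

lemma Mop_eq (g : ℂ → ℂ) (z : ℂ) : Mop g z = Wc z * g z := by
  show ((1 - ‖z‖ ^ 2 : ℝ) : ℂ) * g z = _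
  rw [W_eq]

lemma conj_eq (z : ℂ) : (starRingEnd ℂ) z = Xc z - Yc z * Complex.I := by
  simp [Xc, Yc, Complex.ext_iff]

lemma Lop_eq (θ : ℝ) (u : ℂ → ℂ) (z : ℂ) :
    Lop θ u z = Wc z * lap u z + 4 * (θ:ℂ) * Dop u z - 4 * (θ:ℂ)^2 * u z := by
  show ((1 - ‖z‖ ^ 2 : ℝ) : ℂ) * lap u z
      + 4 * (θ : ℂ) * (z * dz u z + (starRingEnd ℂ) z * dzbar u z)
      - 4 * (θ : ℂ) ^ 2 * u z = _
  rw [W_eq, conj_eq]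
  simp only [dz, dzbar, Dop]
  set a := pdx u z with ha
  set b := pdy u z with hb
  set x := Xc z with hx
  set y := Yc z with hy
  set l := lap u z with hl
  set c := u z with hc
  have hz2 : z = x + y * Complex.I := by
    rw [hx, hy]; exact (Complex.re_add_im z).symm
  rw [hz2]
  linear_combination (-4) * y * (θ:ℂ) * b * Complex.I_sq

lemma smLop (θ : ℝ) {f : ℂ → ℂ} (hf : Sm f) : Sm (Lop θ f) := by
  have e : Lop θ f = fun z => Wc z * lap f z + 4 * (θ:ℂ) * Dop f z - 4 * (θ:ℂ)^2 * f z :=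
    funext (Lop_eq θ f)
  rw [e]
  exact Sm.sub (Sm.add (Sm.W.mul hf.lap) (Sm.cmul _ hf.Dop)) (Sm.cmul _ hf)

lemma Mop_iter (m : ℕ) (g : ℂ → ℂ) (z : ℂ) : Mop^[m] g z = Wc z ^ m * g z := by
  induction m generalizing g with
  | zero => simp
  | succ m ih =>
    rw [Function.iterate_succ_apply, ih, Mop_eq, pow_succ]
    ring

lemma lap_zero_fn : lap (fun _ => (0:ℂ)) = fun _ => 0 := by
  funext w
  show pdx (pdx fun _ => (0:ℂ)) w + pdy (pdy fun _ => (0:ℂ)) w = 0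
  rw [show pdx (fun _ => (0:ℂ)) = fun _ => 0 from funext (pdx_const 0),
    show pdy (fun _ => (0:ℂ)) = fun _ => 0 from funext (pdy_const 0),
    pdx_const, pdy_const]
  ring

lemma lapIter_zero (m : ℕ) : lap^[m] (fun _ => (0:ℂ)) = fun _ => 0 := by
  induction m with
  | zero => rfl
  | succ m ih => rw [Function.iterate_succ_apply, lap_zero_fn, ih]

-- MAIN IDENTITY : Δ^m (L_m u) = W · Δ^{m+1} u on 𝔻
lemma main (m : ℕ) {u : ℂ → ℂ} (hu : Sm u) {z : ℂ} (hz : z ∈ U) :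
    lap^[m] (Lop (m:ℝ) u) z = Wc z * lap^[m+1] u z := by
  cases m with
  | zero =>
    rw [Function.iterate_zero_apply, Lop_eq]
    norm_num [Function.iterate_one]
  | succ m =>
    have hcast : (((m+1:ℕ):ℝ):ℂ) = (m:ℂ) + 1 := by push_cast; ring
    have e : Lop ((m+1:ℕ):ℝ) u
        = fun w => 1 * (Wc w * lap u w) + (4*((m:ℂ)+1)) * Dop u w
            + (-4*((m:ℂ)+1)^2) * u w := by
      funext w; rw [Lop_eq, hcast]; ring
    rw [e, lapIter_lin (m+1) 1 (4*((m:ℂ)+1)) (-4*((m:ℂ)+1)^2)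
        (Sm.W.mul hu.lap) hu.Dop hu hz,
      lapIter_Wmul m hu.lap hz, lapIter_Dop (m+1) hu hz]
    simp only [← Function.iterate_succ_apply]
    push_cast
    ring

lemma flatMap_eq (l : List ℕ) :
    (l.flatMap fun a => [((a:ℕ):ℝ)]) = l.map (fun k : ℕ => (k:ℝ)) := by
  induction l with
  | nil => rfl
  | cons a l ih => simp [List.flatMap_cons, ih]

lemma factor_aux (n : ℕ) (u : ℂ → ℂ) (hu : Sm u) {z : ℂ} (hz : z ∈ U) :
    List.foldr (fun (k:ℝ) acc => Lop k acc) u ((List.range n).map (fun k : ℕ => (k:ℝ))) z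
      = Wc z ^ n * lap^[n] u z := by
  induction n generalizing u with
  | zero => simp
  | succ n ih =>
    rw [List.range_succ, List.map_append, List.foldr_append]
    have e : List.foldr (fun (k:ℝ) acc => Lop k acc) u
        (List.map (fun k : ℕ => (k:ℝ)) [n]) = Lop (n:ℝ) u := rfl
    rw [e, ih (Lop (n:ℝ) u) (smLop (n:ℝ) hu), main n hu hz, pow_succ]
    ring

end Stmt18Aux

/-- the factorization `L₀ L₁ ⋯ L_{n-1} = M^n Δ^n` on smooth functions on 𝔻,
and the consequence that any smooth solution of `L_{n-1}[v] = 0` on 𝔻 is `n`-harmonic. -/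
theorem stmt_18 (n : ℕ) (hn : 0 < n) :
    (∀ u : ℂ → ℂ, ContDiffOn ℝ (⊤ : ℕ∞) u unitDisk →
      ∀ z ∈ unitDisk,
        (List.range n).foldr (fun k acc => Lop (k : ℝ) acc) u z =
          Mop^[n] (lap^[n] u) z) ∧
    (∀ v : ℂ → ℂ, ContDiffOn ℝ (⊤ : ℕ∞) v unitDisk →
      (∀ z ∈ unitDisk, Lop ((n : ℝ) - 1) v z = 0) →
      NHarmonicOn n v unitDisk) := by
  constructor
  · intro u hu z hz
    have hSm : Stmt18Aux.Sm u := hu.of_le (by simp)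
    have hlist : ((List.range n).flatMap fun a => [((a:ℕ):ℝ)])
        = (List.range n).map (fun k : ℕ => (k:ℝ)) := Stmt18Aux.flatMap_eq _
    show List.foldr (fun (k:ℝ) acc => Lop k acc) u
        ((List.range n).flatMap fun a => [((a:ℕ):ℝ)]) z = _
    rw [hlist, Stmt18Aux.factor_aux n u hSm hz, Stmt18Aux.Mop_iter]
  · intro v hv hL
    have hSm : Stmt18Aux.Sm v := hv.of_le (by simp)
    refine ⟨hv, fun z hz => ?_⟩
    obtain ⟨m, rfl⟩ : ∃ m, n = m + 1 := ⟨n - 1, (Nat.succ_pred_eq_of_pos hn).symm⟩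
    have h0 : ∀ w ∈ unitDisk, Lop ((m:ℕ):ℝ) v w = (fun _ => (0:ℂ)) w := by
      intro w hw
      rw [show ((m:ℕ):ℝ) = ((m+1:ℕ):ℝ) - 1 by push_cast; ring]
      exact hL w hw
    have h1 : lap^[m] (Lop ((m:ℕ):ℝ) v) z = 0 := by
      rw [Stmt18Aux.lapIter_congr m h0 hz, Stmt18Aux.lapIter_zero]
    have h2 := Stmt18Aux.main m hSm hz
    rw [h1] at h2
    have hWne : Stmt18Aux.Wc z ≠ 0 := by
      rw [← Stmt18Aux.W_eq]
      have hlt : ‖z‖ < 1 := by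
        simpa [unitDisk, Metric.mem_ball, Complex.dist_eq] using hz
      have hpos : 0 < 1 - ‖z‖ ^ 2 := by
        nlinarith [norm_nonneg z]
      exact Complex.ofReal_ne_zero.mpr (ne_of_gt hpos)
    rcases mul_eq_zero.mp h2.symm with h | h
    · exact absurd h hWne
    · exact h
end
end
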